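/- Let X be a separable F-space and let A be a subset of the space of continuous linear operators on X such that: (1) A is a countable union of compact sets; (2) ⋂_{T∈A} HC(T) is nonempty; (3) there exists S ∈ A which commutes with every T ∈ A. Then ⋂_{T∈A} HC(T) is residual in X, i.e. it is a dense Gδ set. -/

import Mathlib

/-!
The orbit of a common hypercyclic vector `x` under `S` consists of common hypercyclic vectors,
because `S` commutes with every `T ∈ A` and has dense range; this gives density.

For the Gδ property, write `A` as a countable union of compact sets `K`. A compact set of operators
is pointwise bounded, hence equicontinuous by the uniform boundedness principle (valid in every
Baire topological vector space), so `(T, x) ↦ Tⁿ x` is jointly continuous on `K × X`. By the tube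
lemma, for a basic open set `U` the set of `x` such that every `T ∈ K` sends some iterate of `x`
into `U` is open, and `⋂_{T ∈ K} HC(T)` is the countable intersection of these open sets.
-/

open Filter Topology Set

/-- The set of hypercyclic vectors of a continuous linear operator `T`:
those `x` whose orbit `{Tⁿ x : n ≥ 1}` is dense. -/
def hypercyclicVectors {X : Type*} [AddCommGroup X] [Module ℝ X] [TopologicalSpace X]
    (T : X →L[ℝ] X) : Set X :=
  {x : X | Dense (Set.range fun n : ℕ => (T ^ (n + 1)) x)}

open Function
open scoped Pointwise

theorem Absorbent.nonempty_interior_of_isClosed {X : Type*} [Nonempty X] [TopologicalSpace X]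
    [MulAction ℝ X] [ContinuousConstSMul ℝ X] [BaireSpace X] {E : Set X} (hE : Absorbent ℝ E)
    (hEc : IsClosed E) : (interior E).Nonempty := by
  have hcover : ⋃ n : ℕ, ((n + 1 : ℕ) : ℝ) • E = univ := by
    refine eq_univ_of_forall fun x => mem_iUnion.2 ?_
    obtain ⟨n, hn⟩ := ((tendsto_natCast_atTop_cobounded.comp (tendsto_add_atTop_nat 1)).eventually
      (absorbent_iff_inv_smul.1 hE x)).exists
    exact ⟨n, (mem_smul_set_iff_inv_smul_mem₀ (by positivity) _ _).2 hn⟩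
  obtain ⟨n, hn⟩ := nonempty_interior_of_iUnion_of_closed
    (fun n : ℕ => hEc.smul_of_ne_zero (by positivity)) hcover
  rw [interior_smul₀ (by positivity)] at hn
  exact smul_set_nonempty.1 hn

theorem sub_mem_nhds_zero_of_nonempty_interior {G : Type*} [TopologicalSpace G] [AddGroup G]
    [ContinuousAdd G] {E : Set G} (hE : (interior E).Nonempty) : E - E ∈ 𝓝 (0 : G) := by
  obtain ⟨x₀, hx₀⟩ := hE
  have hshift : (· + x₀) ⁻¹' E ∈ 𝓝 (0 : G) :=
    (continuous_add_const x₀).continuousAt.preimage_mem_nhds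
      (by simpa using mem_interior_iff_mem_nhds.1 hx₀)
  filter_upwards [hshift] with v hv
  exact ⟨v + x₀, hv, x₀, interior_subset hx₀, add_sub_cancel_right v x₀⟩

theorem Equicontinuous.continuous_uncurry {ι X α : Type*} [TopologicalSpace ι]
    [TopologicalSpace X] [UniformSpace α] {F : ι → X → α} (hF : Equicontinuous F)
    (hcont : ∀ x, Continuous fun i => F i x) : Continuous (uncurry F) := by
  refine continuous_iff_continuousAt.2 fun ⟨i₀, x₀⟩ => ?_
  rw [ContinuousAt, Uniform.tendsto_nhds_right]
  refine fun U hU => ?_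
  obtain ⟨V, hV, hVU⟩ := comp_mem_uniformity_sets hU
  have hi : ∀ᶠ i in 𝓝 i₀, (F i₀ x₀, F i x₀) ∈ V :=
    Uniform.tendsto_nhds_right.1 ((hcont x₀).tendsto i₀) hV
  rw [nhds_prod_eq]
  exact (hi.prod_mk (hF x₀ V hV)).mono fun p hp => hVU ⟨F p.1 x₀, hp.1, hp.2 p.1⟩

theorem Continuous.uncurry_iterate {Z X : Type*} [TopologicalSpace Z] [TopologicalSpace X]
    {F : Z → X → X} (hF : Continuous (uncurry F)) (n : ℕ) :
    Continuous (uncurry fun z => (F z)^[n]) := by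
  induction n with
  | zero => exact continuous_snd
  | succ n ih =>
    simp only [iterate_succ']
    exact hF.comp (continuous_fst.prodMk ih)

theorem isOpen_setOf_forall_exists_mem {K X Y : Type*} [TopologicalSpace K] [CompactSpace K]
    [TopologicalSpace X] [TopologicalSpace Y] {g : ℕ → K → X → Y}
    (hg : ∀ n, Continuous (uncurry (g n))) {U : Set Y} (hU : IsOpen U) :
    IsOpen {x | ∀ k, ∃ n, g n k x ∈ U} := by
  have hW : IsOpen (⋃ n, uncurry (g n) ⁻¹' U) := isOpen_iUnion fun n => hU.preimage (hg n)
  convert (isClosedMap_snd_of_compactSpace _ hW.isClosed_compl).isOpen_compl using 1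
  ext x
  simp

section BaireSpace

variable {X Y : Type*} [AddCommGroup X] [Module ℝ X] [TopologicalSpace X]
  [IsTopologicalAddGroup X] [ContinuousSMul ℝ X] [BaireSpace X]
  [AddCommGroup Y] [Module ℝ Y] [UniformSpace Y] [IsUniformAddGroup Y]

/-- Unlike `PolynormableSpace.banach_steinhaus`, this does not need `Y` to be locally convex. -/
theorem ContinuousLinearMap.equicontinuous_of_isVonNBounded_range {ι : Type*}
    (T : ι → X →L[ℝ] Y) (hT : ∀ x, Bornology.IsVonNBounded ℝ (range fun i => T i x)) :
    Equicontinuous fun i => ⇑(T i) := by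
  refine equicontinuous_of_equicontinuousAt_zero T fun U hU => ?_
  rw [uniformity_eq_comap_nhds_zero Y] at hU
  obtain ⟨W, hW, hWU⟩ := hU
  obtain ⟨V, hV, hVc, hVneg, hVW⟩ := exists_closed_nhds_zero_neg_eq_add_subset hW
  set E := ⋂ i, T i ⁻¹' V
  have hEc : IsClosed E := isClosed_iInter fun i => hVc.preimage (T i).continuous
  have hEabs : Absorbent ℝ E := absorbent_iff_inv_smul.2 fun x =>
    (absorbs_iff_eventually_cobounded_mapsTo.1 (hT x hV)).mono fun c hc =>
      mem_iInter.2 fun i => by simpa using hc (mem_range_self i)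
  filter_upwards [sub_mem_nhds_zero_of_nonempty_interior
    (hEabs.nonempty_interior_of_isClosed hEc)] with _ ⟨a, ha, b, hb, hab⟩ i
  apply hWU
  subst hab
  have hb' : -T i b ∈ V := by rw [← hVneg]; exact neg_mem_neg.2 (mem_iInter.1 hb i)
  simpa [sub_eq_add_neg] using hVW (add_mem_add (mem_iInter.1 ha i) hb')

theorem IsCompact.continuous_uncurry_coe [ContinuousSMul ℝ Y] {K : Set (X →L[ℝ] Y)}
    (hK : IsCompact K) :
    Continuous (uncurry fun T : K => ⇑(T : X →L[ℝ] Y)) := by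
  have hcont : ∀ x : X, Continuous fun T : K => (T : X →L[ℝ] Y) x := fun x =>
    (continuous_eval_const x).comp continuous_subtype_val
  refine Equicontinuous.continuous_uncurry ?_ hcont
  refine ContinuousLinearMap.equicontinuous_of_isVonNBounded_range _ fun x => ?_
  have hbdd := (hK.image (continuous_eval_const x)).isVonNBounded ℝ
  rwa [image_eq_range] at hbdd

end BaireSpace

section Hypercyclic

variable {X : Type*} [AddCommGroup X] [Module ℝ X] [TopologicalSpace X]

theorem mem_hypercyclicVectors_iff {B : Set (Set X)} (hB : TopologicalSpace.IsTopologicalBasis B)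
    {T : X →L[ℝ] X} {x : X} :
    x ∈ hypercyclicVectors T ↔ ∀ U ∈ B, U.Nonempty → ∃ n : ℕ, (T ^ (n + 1)) x ∈ U := by
  simp [hypercyclicVectors, hB.dense_iff, inter_nonempty]

theorem denseRange_of_mem_hypercyclicVectors {T : X →L[ℝ] X} {x : X}
    (hx : x ∈ hypercyclicVectors T) : DenseRange T :=
  hx.mono <| range_subset_iff.2 fun n => ⟨(T ^ n) x, by rw [pow_succ']; rfl⟩

theorem Commute.mapsTo_hypercyclicVectors {S T : X →L[ℝ] X} (hST : Commute S T)
    (hS : DenseRange S) : MapsTo S (hypercyclicVectors T) (hypercyclicVectors T) := by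
  intro x hx
  have horbit : (range fun n : ℕ => (T ^ (n + 1)) (S x)) =
      S '' range fun n : ℕ => (T ^ (n + 1)) x := by
    rw [← range_comp]
    exact congrArg range (funext fun n => congrArg (· x) (hST.pow_right (n + 1)).eq.symm)
  change Dense _
  rw [horbit]
  exact hS.dense_image S.continuous hx

theorem dense_biInter_hypercyclicVectors {A : Set (X →L[ℝ] X)} {S : X →L[ℝ] X} (hSA : S ∈ A)
    (hS : ∀ T ∈ A, Commute S T) {x : X} (hx : x ∈ ⋂ T ∈ A, hypercyclicVectors T) :
    Dense (⋂ T ∈ A, hypercyclicVectors T) := by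
  have hxS : x ∈ hypercyclicVectors S := mem_iInter₂.1 hx S hSA
  have hinv : MapsTo S (⋂ T ∈ A, hypercyclicVectors T) (⋂ T ∈ A, hypercyclicVectors T) :=
    fun y hy => mem_iInter₂.2 fun T hT => (hS T hT).mapsTo_hypercyclicVectors
      (denseRange_of_mem_hypercyclicVectors hxS) (mem_iInter₂.1 hy T hT)
  refine hxS.mono (range_subset_iff.2 fun n => ?_)
  rw [FunLike.coe_pow_eq_iterate]
  exact hinv.iterate (n + 1) hx

end Hypercyclic

theorem IsCompact.isGδ_biInter_hypercyclicVectors {X : Type*} [AddCommGroup X] [Module ℝ X]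
    [UniformSpace X] [IsUniformAddGroup X] [ContinuousSMul ℝ X] [BaireSpace X]
    [SecondCountableTopology X] {K : Set (X →L[ℝ] X)} (hK : IsCompact K) :
    IsGδ (⋂ T ∈ K, hypercyclicVectors T) := by
  obtain ⟨B, hBc, -, hB⟩ := TopologicalSpace.exists_countable_basis X
  have : CompactSpace K := isCompact_iff_compactSpace.1 hK
  have heq : ⋂ T ∈ K, hypercyclicVectors T =
      ⋂ U ∈ {U ∈ B | U.Nonempty}, {x | ∀ T : K, ∃ n, (⇑(T : X →L[ℝ] X))^[n + 1] x ∈ U} := by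
    ext x
    simp only [mem_iInter₂, mem_hypercyclicVectors_iff hB, FunLike.coe_pow_eq_iterate,
      mem_ofPred_eq, Subtype.forall, and_imp]
    exact ⟨fun h U hU hne T hT => h T hT U hU hne, fun h T hT U hU hne => h U hU hne T hT⟩
  rw [heq]
  refine .biInter (hBc.mono (sep_subset _ _)) fun U hU => IsOpen.isGδ ?_
  exact isOpen_setOf_forall_exists_mem
    (fun n => hK.continuous_uncurry_coe.uncurry_iterate (n + 1)) (hB.isOpen hU.1)

/-- Let `X` be a separable F-space and `A ⊆ L(X)` such that:
(1) `A` is a countable union of compact sets (for the strong topology on `L(X)`);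
(2) `⋂_{T ∈ A} HC(T)` is nonempty;
(3) some `S ∈ A` commutes with every `T ∈ A`.
Then `⋂_{T ∈ A} HC(T)` is residual in `X`, namely it is a dense Gδ set. -/
theorem residual_common_hypercyclic
    {X : Type*} [AddCommGroup X] [Module ℝ X] [UniformSpace X]
    [IsUniformAddGroup X] [ContinuousSMul ℝ X] [CompleteSpace X]
    [TopologicalSpace.MetrizableSpace X] [TopologicalSpace.SeparableSpace X]
    (A : Set (X →L[ℝ] X))
    (hA : ∃ K : ℕ → Set (X →L[ℝ] X), (∀ p, IsCompact (K p)) ∧ A = ⋃ p, K p)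
    (hne : (⋂ T ∈ A, hypercyclicVectors T).Nonempty)
    (hcomm : ∃ S ∈ A, ∀ T ∈ A, S * T = T * S) :
    Dense (⋂ T ∈ A, hypercyclicVectors T) ∧ IsGδ (⋂ T ∈ A, hypercyclicVectors T) := by
  obtain ⟨K, hK, rfl⟩ := hA
  obtain ⟨x, hx⟩ := hne
  obtain ⟨S, hSA, hS⟩ := hcomm
  have : (uniformity X).IsCountablyGenerated := IsUniformAddGroup.uniformity_countably_generated
  have : SecondCountableTopology X := UniformSpace.secondCountable_of_separable X
  refine ⟨dense_biInter_hypercyclicVectors hSA hS hx, ?_⟩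
  rw [biInter_iUnion]
  exact .iInter fun p => (hK p).isGδ_biInter_hypercyclicVectors
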